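/- Every context-free language L with ε ∉ L can be generated by a context-free grammar in Greibach Normal Form, i.e. a grammar in which every production is of the form A → aγ with A a nonterminal, a a terminal, and γ a (possibly empty) string of nonterminals. -/

import Mathlib

/-- A leftmost derivation step: the leftmost nonterminal occurrence (i.e. a nonterminal
preceded only by terminals) is rewritten using a rule of the grammar. -/
def LeftmostProduces {T : Type} (g : ContextFreeGrammar T)
    (u v : List (Symbol T g.NT)) : Prop :=
  ∃ r ∈ g.rules, ∃ (x : List T) (γ : List (Symbol T g.NT)),
    u = List.map Symbol.terminal x ++ Symbol.nonterminal r.input :: γ ∧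
    v = List.map Symbol.terminal x ++ r.output ++ γ

/-- Zero or more leftmost derivation steps. -/
abbrev LeftmostDerives {T : Type} (g : ContextFreeGrammar T) :
    List (Symbol T g.NT) → List (Symbol T g.NT) → Prop :=
  Relation.ReflTransGen (LeftmostProduces g)

/-- `G` is LL(1): whenever `S ⇒*lm wAγ` and two `A`-productions `A → α`, `A → β` admit
leftmost derivations `wαγ ⇒*lm wx` and `wβγ ⇒*lm wy` with `x` and `y` both empty or
beginning with the same terminal, the two productions coincide. -/
def IsLL1 {T : Type} (g : ContextFreeGrammar T) : Prop :=
  ∀ (w : List T) (A : g.NT) (γ : List (Symbol T g.NT))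
    (r₁ r₂ : ContextFreeRule T g.NT),
    LeftmostDerives g [Symbol.nonterminal g.initial]
      (List.map Symbol.terminal w ++ Symbol.nonterminal A :: γ) →
    r₁ ∈ g.rules → r₂ ∈ g.rules → r₁.input = A → r₂.input = A →
    ∀ x y : List T,
      LeftmostDerives g (List.map Symbol.terminal w ++ r₁.output ++ γ)
        (List.map Symbol.terminal (w ++ x)) →
      LeftmostDerives g (List.map Symbol.terminal w ++ r₂.output ++ γ)
        (List.map Symbol.terminal (w ++ y)) →
      ((x = [] ∧ y = []) ∨ ∃ (a : T) (x' y' : List T), x = a :: x' ∧ y = a :: y') →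
      r₁.output = r₂.output

/-- `G` is in Greibach Normal Form: every production is of the form `A → aγ`
with `a` a terminal and `γ` a string of nonterminals. -/
def InGNF {T : Type} (g : ContextFreeGrammar T) : Prop :=
  ∀ r ∈ g.rules, ∃ (a : T) (γ : List g.NT),
    r.output = Symbol.terminal a :: List.map Symbol.nonterminal γ

/-!
Once ε-rules are gone, the left-corner transform turns left recursion into right recursion: its
nonterminal `(A, X)` generates the strings `γ` with `A ⇒* X γ`, and every rule of an original
nonterminal `A` reads `A → a (A, a)`. After removing the ε-rules and unit rules of the transformed
grammar, every rule begins with a terminal or with an original nonterminal, all of whose rules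
begin with a terminal, so substituting for that leading nonterminal once puts every rule in the
form `A → a α`. Replacing each terminal `b` inside `α` by a fresh nonterminal with the single rule
`b` then gives Greibach Normal Form.
-/

namespace ContextFreeRule

variable {T N : Type}

def StartsWithTerminal (r : ContextFreeRule T N) : Prop :=
  ∃ a δ, r.output = .terminal a :: δ

def StartsIn (S : Set N) (r : ContextFreeRule T N) : Prop :=
  ∃ B ∈ S, ∃ δ, r.output = .nonterminal B :: δ

def IsUnitRule (r : ContextFreeRule T N) : Prop :=
  ∃ B, r.output = [.nonterminal B]

lemma Rewrites.append_cases {r : ContextFreeRule T N} {u₁ u₂ v : List (Symbol T N)}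
    (h : r.Rewrites (u₁ ++ u₂) v) :
    (∃ v₁, r.Rewrites u₁ v₁ ∧ v = v₁ ++ u₂) ∨ ∃ v₂, r.Rewrites u₂ v₂ ∧ v = u₁ ++ v₂ := by
  induction u₁ generalizing v with
  | nil => exact .inr ⟨v, h, rfl⟩
  | cons x u₁ ih =>
    cases h with
    | head s => exact .inl ⟨r.output ++ u₁, .head u₁, by simp⟩
    | cons _ h =>
      rcases ih h with ⟨v₁, h₁, rfl⟩ | ⟨v₂, h₂, rfl⟩
      · exact .inl ⟨x :: v₁, h₁.cons x, rfl⟩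
      · exact .inr ⟨v₂, h₂, rfl⟩

end ContextFreeRule

namespace ContextFreeGrammar

variable {T : Type}

@[reducible]
def withRules (g : ContextFreeGrammar T) (rules : Finset (ContextFreeRule T g.NT)) :
    ContextFreeGrammar T :=
  ⟨g.NT, g.initial, rules⟩

inductive DerivesIn (g : ContextFreeGrammar T) :
    List (Symbol T g.NT) → List (Symbol T g.NT) → ℕ → Prop
  | refl (u : List (Symbol T g.NT)) : DerivesIn g u u 0
  | head {u v w n} : g.Produces u v → DerivesIn g v w n → DerivesIn g u w (n + 1)

section Derivations

variable {g : ContextFreeGrammar T}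

lemma produces_of_mem {r : ContextFreeRule T g.NT} (hr : r ∈ g.rules) :
    g.Produces [.nonterminal r.input] r.output :=
  ⟨r, hr, .input_output⟩

lemma Derives.append {u₁ v₁ u₂ v₂ : List (Symbol T g.NT)}
    (h₁ : g.Derives u₁ v₁) (h₂ : g.Derives u₂ v₂) : g.Derives (u₁ ++ u₂) (v₁ ++ v₂) :=
  (h₁.append_right u₂).trans (h₂.append_left v₁)

lemma Derives.flatMap {g' : ContextFreeGrammar T} (f : Symbol T g'.NT → List (Symbol T g.NT))
    (hf : ∀ r ∈ g'.rules, g.Derives (f (.nonterminal r.input)) (r.output.flatMap f))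
    {u v : List (Symbol T g'.NT)} (h : g'.Derives u v) :
    g.Derives (u.flatMap f) (v.flatMap f) := by
  induction h with
  | refl => rfl
  | tail _ p ih =>
    obtain ⟨r, hr, hrw⟩ := p
    obtain ⟨p, q, rfl, rfl⟩ := hrw.exists_parts
    refine ih.trans ?_
    simp only [List.flatMap_append]
    exact ((Derives.refl _).append (by simpa using hf r hr)).append (.refl _)

lemma language_withRules_le {s : Finset (ContextFreeRule T g.NT)}
    (hs : ∀ r ∈ s, g.Derives [.nonterminal r.input] r.output) :
    (g.withRules s).language ≤ g.language := fun w hw =>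
  (mem_language_iff g w).mpr <| by
    simpa using Derives.flatMap (g := g) (g' := g.withRules s) (fun x => [x]) (by simpa using hs) hw

lemma DerivesIn.derives {u v n} (h : DerivesIn g u v n) : g.Derives u v := by
  induction h with
  | refl => rfl
  | head p _ ih => exact p.trans_derives ih

lemma Derives.exists_derivesIn {u v} (h : g.Derives u v) : ∃ n, DerivesIn g u v n := by
  induction h using Relation.ReflTransGen.head_induction_on with
  | refl => exact ⟨0, .refl _⟩
  | head p _ ih => obtain ⟨n, h⟩ := ih; exact ⟨n + 1, .head p h⟩

lemma DerivesIn.append_split {u₁ u₂ v : List (Symbol T g.NT)} {n}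
    (h : DerivesIn g (u₁ ++ u₂) v n) :
    ∃ v₁ v₂ n₁ n₂, v = v₁ ++ v₂ ∧ n₁ + n₂ = n ∧
      DerivesIn g u₁ v₁ n₁ ∧ DerivesIn g u₂ v₂ n₂ := by
  generalize hu : u₁ ++ u₂ = u at h
  induction h generalizing u₁ u₂ with
  | refl => exact ⟨u₁, u₂, 0, 0, hu.symm, rfl, .refl _, .refl _⟩
  | head p _ ih =>
    subst hu
    obtain ⟨r, hr, hrw⟩ := p
    rcases hrw.append_cases with ⟨v₁, hv₁, rfl⟩ | ⟨v₂, hv₂, rfl⟩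
    · obtain ⟨w₁, w₂, n₁, n₂, rfl, rfl, h₁, h₂⟩ := ih rfl
      exact ⟨w₁, w₂, n₁ + 1, n₂, rfl, by omega, .head ⟨r, hr, hv₁⟩ h₁, h₂⟩
    · obtain ⟨w₁, w₂, n₁, n₂, rfl, rfl, h₁, h₂⟩ := ih rfl
      exact ⟨w₁, w₂, n₁, n₂ + 1, rfl, by omega, h₁, .head ⟨r, hr, hv₂⟩ h₂⟩

lemma DerivesIn.append_split_terminal {u₁ u₂ : List (Symbol T g.NT)} {w : List T} {n}
    (h : DerivesIn g (u₁ ++ u₂) (w.map .terminal) n) :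
    ∃ w₁ w₂ n₁ n₂, w = w₁ ++ w₂ ∧ n₁ + n₂ = n ∧
      DerivesIn g u₁ (w₁.map .terminal) n₁ ∧ DerivesIn g u₂ (w₂.map .terminal) n₂ := by
  obtain ⟨v₁, v₂, n₁, n₂, hv, hn, h₁, h₂⟩ := h.append_split
  obtain ⟨w₁, w₂, rfl, rfl, rfl⟩ := List.map_eq_append_iff.mp hv
  exact ⟨w₁, w₂, n₁, n₂, rfl, hn, h₁, h₂⟩

lemma DerivesIn.eq_of_map_terminal {w : List T} {v n} (h : DerivesIn g (w.map .terminal) v n) :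
    v = w.map .terminal := by
  cases h with
  | refl => rfl
  | head p _ => simpa using p.exists_nonterminal_input_mem

lemma DerivesIn.eq_nil_of_nil {w : List T} {n} (h : DerivesIn g [] (w.map .terminal) n) :
    w = [] := by
  simpa using DerivesIn.eq_of_map_terminal (w := []) h

lemma DerivesIn.eq_singleton_of_terminal {a : T} {w : List T} {n}
    (h : DerivesIn g [.terminal a] (w.map .terminal) n) : w = [a] := by
  have := DerivesIn.eq_of_map_terminal (w := [a]) h
  rcases w with _ | ⟨b, _ | ⟨c, w⟩⟩ <;> simp at this
  rw [this]

lemma DerivesIn.exists_rule {A : g.NT} {w : List T} {n}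
    (h : DerivesIn g [.nonterminal A] (w.map .terminal) n) :
    ∃ r ∈ g.rules, ∃ m, n = m + 1 ∧ r.input = A ∧ DerivesIn g r.output (w.map .terminal) m := by
  generalize hv : w.map Symbol.terminal = v at h
  cases h with
  | refl => cases w <;> simp_all
  | head p h =>
    subst hv
    obtain ⟨r, hr, hrw⟩ := p
    cases hrw with
    | head s => exact ⟨r, hr, _, rfl, rfl, by simpa using h⟩
    | cons _ hrw => cases hrw

end Derivations

/-- `ih` is the hypothesis of a strong induction on the length of derivations from a single
nonterminal; this extends it to derivations from strings. -/
theorem DerivesIn.derives_map {g g' : ContextFreeGrammar T}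
    (φ : Symbol T g.NT → Symbol T g'.NT) (P : Symbol T g.NT → Prop)
    (hφ : ∀ a, P (.terminal a) → g'.Derives [φ (.terminal a)] [.terminal a]) {n : ℕ}
    (ih : ∀ m ≤ n, ∀ (A : g.NT) (w : List T), P (.nonterminal A) →
      DerivesIn g [.nonterminal A] (w.map .terminal) m →
        g'.Derives [φ (.nonterminal A)] (w.map .terminal))
    {α : List (Symbol T g.NT)} {w : List T} (hα : ∀ x ∈ α, P x)
    (h : DerivesIn g α (w.map .terminal) n) :
    g'.Derives (α.map φ) (w.map .terminal) := by
  induction α generalizing w n with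
  | nil => rw [h.eq_nil_of_nil]; rfl
  | cons x s ihs =>
    obtain ⟨w₁, w₂, n₁, n₂, rfl, rfl, h₁, h₂⟩ := append_split_terminal (u₁ := [x]) h
    have hx : g'.Derives [φ x] (w₁.map .terminal) := by
      cases x with
      | terminal a => rw [h₁.eq_singleton_of_terminal]; exact hφ a (hα _ List.mem_cons_self)
      | nonterminal A => exact ih n₁ (by omega) A w₁ (hα _ List.mem_cons_self) h₁
    have hs := ihs (fun m hm => ih m (by omega)) (fun y hy => hα y (List.mem_cons_of_mem x hy)) h₂
    simpa using hx.append hs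

theorem DerivesIn.derives_withRules {g : ContextFreeGrammar T}
    {s : Finset (ContextFreeRule T g.NT)} {n : ℕ}
    (ih : ∀ m ≤ n, ∀ (A : g.NT) (w : List T), DerivesIn g [.nonterminal A] (w.map .terminal) m →
      (g.withRules s).Derives [.nonterminal A] (w.map .terminal))
    {α : List (Symbol T g.NT)} {w : List T} (h : DerivesIn g α (w.map .terminal) n) :
    (g.withRules s).Derives α (w.map .terminal) := by
  simpa using h.derives_map (g := g) (g' := g.withRules s) id (fun _ => True) (fun _ _ => .refl _)
    (fun m hm A w _ => ih m hm A w) (fun _ _ => trivial)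

section RemoveEpsilon

variable (g : ContextFreeGrammar T)

def Nullable (A : g.NT) : Prop := g.Derives [.nonterminal A] []

inductive DeletesNullable (g : ContextFreeGrammar T) :
    List (Symbol T g.NT) → List (Symbol T g.NT) → Prop
  | nil : DeletesNullable g [] []
  | keep (x) {l l'} : DeletesNullable g l l' → DeletesNullable g (x :: l) (x :: l')
  | delete {A l l'} : g.Nullable A → DeletesNullable g l l' →
      DeletesNullable g (.nonterminal A :: l) l'

def epsilonFreeRules : Set (ContextFreeRule T g.NT) :=
  {r | ∃ r₀ ∈ g.rules, r.input = r₀.input ∧ g.DeletesNullable r₀.output r.output ∧ r.output ≠ []}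

variable {g}

lemma DeletesNullable.sublist {l l'} (h : g.DeletesNullable l l') : l'.Sublist l := by
  induction h with
  | nil => exact .slnil
  | keep x _ ih => exact ih.cons_cons x
  | delete _ _ ih => exact ih.cons _

lemma DeletesNullable.derives {l l'} (h : g.DeletesNullable l l') : g.Derives l l' := by
  induction h with
  | nil => rfl
  | keep x _ ih => exact ih.append_left [x]
  | delete hA _ ih => exact hA.append (u₁ := [_]) ih

lemma DeletesNullable.exists_eq_append {l₁ l₂ l' : List (Symbol T g.NT)}
    (h : g.DeletesNullable (l₁ ++ l₂) l') (hl₁ : ∀ A, .nonterminal A ∈ l₁ → ¬ g.Nullable A) :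
    ∃ l₂', l' = l₁ ++ l₂' ∧ g.DeletesNullable l₂ l₂' := by
  induction l₁ generalizing l' with
  | nil => exact ⟨l', rfl, h⟩
  | cons x l₁ ih =>
    cases h with
    | keep _ h =>
      obtain ⟨l₂', rfl, h₂⟩ := ih h fun A hA => hl₁ A (List.mem_cons_of_mem x hA)
      exact ⟨l₂', rfl, h₂⟩
    | delete hA _ => exact absurd hA (hl₁ _ List.mem_cons_self)

variable (g)

lemma finite_epsilonFreeRules : g.epsilonFreeRules.Finite := by
  refine ((g.rules.finite_toSet.biUnion fun r _ => (r.output.sublists.finite_toSet.image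
    (ContextFreeRule.mk r.input)))).subset ?_
  rintro ⟨A, o⟩ ⟨r, hr, rfl, hsub, -⟩
  exact Set.mem_biUnion hr ⟨o, by simpa [List.mem_sublists] using hsub.sublist, rfl⟩

noncomputable def removeEpsilon : ContextFreeGrammar T :=
  g.withRules g.finite_epsilonFreeRules.toFinset

variable {g}

lemma mem_removeEpsilon_rules {r : ContextFreeRule T g.NT} :
    r ∈ g.removeEpsilon.rules ↔ ∃ r₀ ∈ g.rules,
      r.input = r₀.input ∧ g.DeletesNullable r₀.output r.output ∧ r.output ≠ [] :=
  Set.Finite.mem_toFinset _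

lemma removeEpsilon_output_ne_nil {r : ContextFreeRule T g.NT} (hr : r ∈ g.removeEpsilon.rules) :
    r.output ≠ [] :=
  let ⟨_, _, _, _, hne⟩ := mem_removeEpsilon_rules.mp hr
  hne

lemma exists_deletesNullable_of_derivesIn {n : ℕ}
    (ih : ∀ m ≤ n, ∀ (A : g.NT) (w : List T), DerivesIn g [.nonterminal A] (w.map .terminal) m →
      w ≠ [] → g.removeEpsilon.Derives [.nonterminal A] (w.map .terminal))
    {α : List (Symbol T g.NT)} {w : List T} (h : DerivesIn g α (w.map .terminal) n) :
    ∃ α', g.DeletesNullable α α' ∧ g.removeEpsilon.Derives α' (w.map .terminal) := by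
  induction α generalizing w n with
  | nil => exact ⟨[], .nil, by rw [h.eq_nil_of_nil]; rfl⟩
  | cons x s ihs =>
    obtain ⟨w₁, w₂, n₁, n₂, rfl, rfl, h₁, h₂⟩ := h.append_split_terminal (u₁ := [x])
    obtain ⟨s', hs', hder⟩ := ihs (fun m hm => ih m (by omega)) h₂
    cases x with
    | terminal a =>
      rw [h₁.eq_singleton_of_terminal]
      exact ⟨_, hs'.keep _, hder.append_left [.terminal a]⟩
    | nonterminal A =>
      rcases eq_or_ne w₁ [] with rfl | hw₁
      · exact ⟨s', hs'.delete h₁.derives, hder⟩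
      · exact ⟨_, hs'.keep _, by
          rw [List.map_append]; exact (ih n₁ (by omega) A w₁ h₁ hw₁).append hder⟩

theorem removeEpsilon_derives_of_derivesIn {n : ℕ} {A : g.NT} {w : List T}
    (h : DerivesIn g [.nonterminal A] (w.map .terminal) n) (hw : w ≠ []) :
    g.removeEpsilon.Derives [.nonterminal A] (w.map .terminal) := by
  obtain ⟨r, hr, m, rfl, rfl, hm⟩ := h.exists_rule
  obtain ⟨α, hα, hder⟩ := exists_deletesNullable_of_derivesIn
    (fun k _ _ _ hk hw => removeEpsilon_derives_of_derivesIn hk hw) hm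
  have hα_ne : α ≠ [] := by
    rintro rfl
    obtain ⟨k, hk⟩ := hder.exists_derivesIn
    exact hw hk.eq_nil_of_nil
  have hrule : ⟨r.input, α⟩ ∈ g.removeEpsilon.rules :=
    mem_removeEpsilon_rules.mpr ⟨r, hr, rfl, hα, hα_ne⟩
  exact (produces_of_mem hrule).trans_derives hder
termination_by n
decreasing_by all_goals omega

theorem language_removeEpsilon (hg : [] ∉ g.language) : g.removeEpsilon.language = g.language := by
  refine le_antisymm (language_withRules_le fun r hr => ?_) fun w hw => ?_
  · obtain ⟨r₀, hr₀, hin, hdel, -⟩ := mem_removeEpsilon_rules.mp hr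
    exact hin ▸ (produces_of_mem hr₀).trans_derives hdel.derives
  · obtain ⟨n, hn⟩ := Derives.exists_derivesIn hw
    exact removeEpsilon_derives_of_derivesIn hn (by rintro rfl; exact hg hw)

end RemoveEpsilon

section RemoveUnit

variable (g : ContextFreeGrammar T)

def UnitDerives : g.NT → g.NT → Prop :=
  Relation.ReflTransGen fun A B => (⟨A, [.nonterminal B]⟩ : ContextFreeRule T g.NT) ∈ g.rules

def unitFreeRules : Set (ContextFreeRule T g.NT) :=
  {r | ∃ r₀ ∈ g.rules, g.UnitDerives r.input r₀.input ∧ r.output = r₀.output ∧ ¬ r₀.IsUnitRule}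

lemma finite_unitFreeRules : g.unitFreeRules.Finite := by
  refine ((g.rules.finite_toSet.prod g.rules.finite_toSet).image
    fun p => ContextFreeRule.mk p.1.input p.2.output).subset ?_
  rintro ⟨A, o⟩ ⟨r₀, hr₀, hA, rfl, -⟩
  rcases hA.cases_head with rfl | ⟨B, hAB, -⟩
  · exact ⟨(r₀, r₀), ⟨hr₀, hr₀⟩, rfl⟩
  · exact ⟨(⟨A, [.nonterminal B]⟩, r₀), ⟨hAB, hr₀⟩, rfl⟩

noncomputable def removeUnit : ContextFreeGrammar T :=
  g.withRules g.finite_unitFreeRules.toFinset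

variable {g}

lemma mem_removeUnit_rules {r : ContextFreeRule T g.NT} :
    r ∈ g.removeUnit.rules ↔ ∃ r₀ ∈ g.rules,
      g.UnitDerives r.input r₀.input ∧ r.output = r₀.output ∧ ¬ r₀.IsUnitRule :=
  Set.Finite.mem_toFinset _

lemma UnitDerives.derives {A B : g.NT} (h : g.UnitDerives A B) :
    g.Derives [.nonterminal A] [.nonterminal B] := by
  induction h with
  | refl => rfl
  | tail _ hBC ih => exact ih.trans_produces (produces_of_mem hBC)

theorem removeUnit_derives_of_derivesIn {n : ℕ} {A₀ A : g.NT} {w : List T}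
    (hA : g.UnitDerives A₀ A) (h : DerivesIn g [.nonterminal A] (w.map .terminal) n) :
    g.removeUnit.Derives [.nonterminal A₀] (w.map .terminal) := by
  obtain ⟨r, hr, m, rfl, rfl, hm⟩ := h.exists_rule
  by_cases hu : r.IsUnitRule
  · obtain ⟨B, hB⟩ := hu
    rw [hB] at hm
    have hrB : ⟨r.input, [.nonterminal B]⟩ ∈ g.rules := by rwa [← hB]
    exact removeUnit_derives_of_derivesIn (hA.tail hrB) hm
  · have hrule : ⟨A₀, r.output⟩ ∈ g.removeUnit.rules :=
      mem_removeUnit_rules.mpr ⟨r, hr, hA, rfl, hu⟩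
    exact (produces_of_mem hrule).trans_derives <|
      hm.derives_withRules fun k _ B _ hk => removeUnit_derives_of_derivesIn .refl hk
termination_by n
decreasing_by all_goals omega

theorem language_removeUnit : g.removeUnit.language = g.language := by
  refine le_antisymm (language_withRules_le fun r hr => ?_) fun w hw => ?_
  · obtain ⟨r₀, hr₀, hA, hout, -⟩ := mem_removeUnit_rules.mp hr
    exact hout ▸ hA.derives.trans_produces (produces_of_mem hr₀)
  · obtain ⟨n, hn⟩ := Derives.exists_derivesIn hw
    exact removeUnit_derives_of_derivesIn .refl hn

lemma startsWithTerminal_of_mem_removeUnit {S : Set g.NT}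
    (hS : ∀ r ∈ g.rules, r.input ∈ S → r.StartsWithTerminal)
    {r : ContextFreeRule T g.NT} (hr : r ∈ g.removeUnit.rules) (hrS : r.input ∈ S) :
    r.StartsWithTerminal := by
  obtain ⟨r₀, hr₀, hA, hout, -⟩ := mem_removeUnit_rules.mp hr
  rcases hA.cases_head with hin | ⟨B, hB, -⟩
  · obtain ⟨a, δ, h⟩ := hS r₀ hr₀ (hin ▸ hrS)
    exact ⟨a, δ, hout.trans h⟩
  · obtain ⟨a, δ, h⟩ := hS _ hB hrS
    simp at h

lemma startsWithTerminal_or_startsIn_of_mem_removeUnit {S : Set g.NT}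
    (hg : ∀ r ∈ g.rules, r.StartsWithTerminal ∨ r.StartsIn S ∨ r.IsUnitRule)
    {r : ContextFreeRule T g.NT} (hr : r ∈ g.removeUnit.rules) :
    r.StartsWithTerminal ∨ r.StartsIn S := by
  obtain ⟨r₀, hr₀, -, hout, hu⟩ := mem_removeUnit_rules.mp hr
  simp only [ContextFreeRule.StartsWithTerminal, ContextFreeRule.StartsIn, hout]
  exact (hg r₀ hr₀).imp_right (·.resolve_right hu)

end RemoveUnit

section ExpandHead

variable (g : ContextFreeGrammar T)

def expandHeadRules : Set (ContextFreeRule T g.NT) :=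
  {r | r ∈ g.rules ∧ ∀ B δ, r.output ≠ .nonterminal B :: δ} ∪
  {r | ∃ r₁ ∈ g.rules, ∃ r₂ ∈ g.rules, ∃ δ, r₁.output = .nonterminal r₂.input :: δ ∧
    r = ⟨r₁.input, r₂.output ++ δ⟩}

lemma finite_expandHeadRules : g.expandHeadRules.Finite := by
  refine (g.rules.finite_toSet.subset fun r hr => hr.1).union <|
    ((g.rules.finite_toSet.prod g.rules.finite_toSet).image
      fun p => ContextFreeRule.mk p.1.input (p.2.output ++ p.1.output.tail)).subset ?_
  rintro _ ⟨r₁, hr₁, r₂, hr₂, δ, hout, rfl⟩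
  exact ⟨(r₁, r₂), ⟨hr₁, hr₂⟩, by simp [hout]⟩

noncomputable def expandHead : ContextFreeGrammar T :=
  g.withRules g.finite_expandHeadRules.toFinset

variable {g}

lemma mem_expandHead_rules {r : ContextFreeRule T g.NT} :
    r ∈ g.expandHead.rules ↔ (r ∈ g.rules ∧ ∀ B δ, r.output ≠ .nonterminal B :: δ) ∨
      ∃ r₁ ∈ g.rules, ∃ r₂ ∈ g.rules, ∃ δ, r₁.output = .nonterminal r₂.input :: δ ∧
        r = ⟨r₁.input, r₂.output ++ δ⟩ :=
  Set.Finite.mem_toFinset _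

theorem expandHead_derives_of_derivesIn {n : ℕ} {A : g.NT} {w : List T}
    (h : DerivesIn g [.nonterminal A] (w.map .terminal) n) :
    g.expandHead.Derives [.nonterminal A] (w.map .terminal) := by
  obtain ⟨r, hr, m, rfl, rfl, hm⟩ := h.exists_rule
  have ih : ∀ k ≤ m, ∀ (B : g.NT) (v : List T), DerivesIn g [.nonterminal B] (v.map .terminal) k →
      g.expandHead.Derives [.nonterminal B] (v.map .terminal) :=
    fun k hk _ _ h => expandHead_derives_of_derivesIn h
  by_cases hhead : ∃ B δ, r.output = .nonterminal B :: δ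
  · obtain ⟨B, δ, hout⟩ := hhead
    rw [hout] at hm
    obtain ⟨w₁, w₂, n₁, n₂, rfl, rfl, h₁, h₂⟩ := hm.append_split_terminal (u₁ := [.nonterminal B])
    obtain ⟨r₂, hr₂, k, rfl, rfl, hk⟩ := h₁.exists_rule
    have hrule : ⟨r.input, r₂.output ++ δ⟩ ∈ g.expandHead.rules :=
      mem_expandHead_rules.mpr (.inr ⟨r, hr, r₂, hr₂, δ, hout, rfl⟩)
    refine (produces_of_mem hrule).trans_derives ?_
    rw [List.map_append]
    exact (hk.derives_withRules fun j hj => ih j (by omega)).append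
      (h₂.derives_withRules fun j hj => ih j (by omega))
  · have hrule : r ∈ g.expandHead.rules :=
      mem_expandHead_rules.mpr (.inl ⟨hr, fun B δ hout => hhead ⟨B, δ, hout⟩⟩)
    exact (produces_of_mem hrule).trans_derives (hm.derives_withRules ih)
termination_by n
decreasing_by all_goals omega

theorem language_expandHead : g.expandHead.language = g.language := by
  refine le_antisymm (language_withRules_le fun r hr => ?_) fun w hw => ?_
  · rcases mem_expandHead_rules.mp hr with ⟨hr, -⟩ | ⟨r₁, hr₁, r₂, hr₂, δ, hout, rfl⟩
    · exact (produces_of_mem hr).single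
    · have h₁ := produces_of_mem hr₁
      rw [hout] at h₁
      exact h₁.trans_derives (produces_of_mem hr₂ |>.append_right δ).single
  · obtain ⟨n, hn⟩ := Derives.exists_derivesIn hw
    exact expandHead_derives_of_derivesIn hn

lemma startsWithTerminal_of_mem_expandHead {S : Set g.NT}
    (hS : ∀ r ∈ g.rules, r.input ∈ S → r.StartsWithTerminal)
    (hg : ∀ r ∈ g.rules, r.StartsWithTerminal ∨ r.StartsIn S)
    {r : ContextFreeRule T g.NT} (hr : r ∈ g.expandHead.rules) : r.StartsWithTerminal := by
  rcases mem_expandHead_rules.mp hr with ⟨hr, hnot⟩ | ⟨r₁, hr₁, r₂, hr₂, δ, hout, rfl⟩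
  · rcases hg r hr with hT | ⟨B, -, δ, hB⟩
    · exact hT
    · exact absurd hB (hnot B δ)
  · rcases hg r₁ hr₁ with ⟨a, _, ha⟩ | ⟨B, hB, _, hB'⟩
    · simp [hout] at ha
    · rw [hout, List.cons.injEq, Symbol.nonterminal.injEq] at hB'
      obtain ⟨a, δ₂, h₂⟩ := hS r₂ hr₂ (hB'.1 ▸ hB)
      exact ⟨a, δ₂ ++ δ, by simp [h₂]⟩

end ExpandHead

section LeftCorner

variable (g : ContextFreeGrammar T)

def inputs : Set g.NT := ContextFreeRule.input '' (g.rules : Set (ContextFreeRule T g.NT))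

def terminals : Set T := {a | ∃ r ∈ g.rules, .terminal a ∈ r.output}

lemma finite_terminals : g.terminals.Finite := by
  refine (g.rules.finite_toSet.biUnion fun r _ => r.output.finite_toSet.preimage
    (fun _ _ _ _ h => Symbol.terminal.inj h)).subset ?_
  rintro a ⟨r, hr, ha⟩
  exact Set.mem_biUnion hr ha

/-- `.inl A` plays the role of `A`, and `.inr (A, X)` derives only words `u` with `A ⇒* X u`
(`derives_of_leftCorner_inr`). -/
abbrev LeftCornerNT : Type := g.NT ⊕ (g.NT × Symbol T g.NT)

def leftCornerSymbol : Symbol T g.NT → Symbol T g.LeftCornerNT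
  | .terminal a => .terminal a
  | .nonterminal A => .nonterminal (.inl A)

def ofLeftCornerSymbol : Symbol T g.LeftCornerNT → Symbol T g.NT
  | .terminal a => .terminal a
  | .nonterminal (.inl A) => .nonterminal A
  | .nonterminal (.inr (A, _)) => .nonterminal A

@[simp]
lemma ofLeftCornerSymbol_comp_leftCornerSymbol :
    g.ofLeftCornerSymbol ∘ g.leftCornerSymbol = id :=
  funext fun x => by cases x <;> rfl

def leftCornerRules : Set (ContextFreeRule T g.LeftCornerNT) :=
  {r | ∃ A ∈ g.inputs, ∃ a ∈ g.terminals,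
    r = ⟨.inl A, [.terminal a, .nonterminal (.inr (A, .terminal a))]⟩} ∪
  {r | ∃ A ∈ g.inputs, ∃ r₀ ∈ g.rules, ∃ X β, r₀.output = X :: β ∧
    r = ⟨.inr (A, X),
      β.map g.leftCornerSymbol ++ [.nonterminal (.inr (A, .nonterminal r₀.input))]⟩} ∪
  {r | ∃ A ∈ g.inputs, r = ⟨.inr (A, .nonterminal A), []⟩}

lemma finite_leftCornerRules : g.leftCornerRules.Finite := by
  have hinputs : g.inputs.Finite := g.rules.finite_toSet.image _
  refine .union (.union ?_ ?_) ?_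
  · refine ((hinputs.prod g.finite_terminals).image fun p =>
      (⟨.inl p.1, [.terminal p.2, .nonterminal (.inr (p.1, .terminal p.2))]⟩ :
        ContextFreeRule T g.LeftCornerNT)).subset ?_
    rintro _ ⟨A, hA, a, ha, rfl⟩
    exact ⟨(A, a), ⟨hA, ha⟩, rfl⟩
  · refine ((hinputs.prod g.rules.finite_toSet).image fun p =>
      (⟨.inr (p.1, p.2.output.headD (.nonterminal p.1)), p.2.output.tail.map g.leftCornerSymbol ++
        [.nonterminal (.inr (p.1, .nonterminal p.2.input))]⟩ :
          ContextFreeRule T g.LeftCornerNT)).subset ?_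
    rintro _ ⟨A, hA, r₀, hr₀, X, β, hout, rfl⟩
    exact ⟨(A, r₀), ⟨hA, hr₀⟩, by simp [hout]⟩
  · exact (hinputs.image fun A => ⟨.inr (A, .nonterminal A), []⟩).subset
      fun _ ⟨A, hA, h⟩ => ⟨A, hA, h.symm⟩

@[reducible]
noncomputable def leftCorner : ContextFreeGrammar T :=
  ⟨g.LeftCornerNT, .inl g.initial, g.finite_leftCornerRules.toFinset⟩

variable {g}

lemma mem_leftCorner_rules {r : ContextFreeRule T g.LeftCornerNT} :
    r ∈ g.leftCorner.rules ↔ r ∈ g.leftCornerRules :=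
  Set.Finite.mem_toFinset _

lemma DerivesIn.mem_inputs {A : g.NT} {w : List T} {n : ℕ}
    (h : DerivesIn g [.nonterminal A] (w.map .terminal) n) : A ∈ g.inputs :=
  let ⟨r, hr, _, _, hA, _⟩ := h.exists_rule
  ⟨r, hr, hA⟩

lemma leftCorner_derives_nil {A : g.NT} (hA : A ∈ g.inputs) :
    g.leftCorner.Derives [.nonterminal (.inr (A, .nonterminal A))] [] :=
  (produces_of_mem (r := ⟨_, []⟩) (mem_leftCorner_rules.mpr (.inr ⟨A, hA, rfl⟩))).single

theorem leftCorner_derives_of_derivesIn (hg : ∀ r ∈ g.rules, r.output ≠ []) {n : ℕ}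
    {B : g.NT} {w : List T} (h : DerivesIn g [.nonterminal B] (w.map .terminal) n)
    {A : g.NT} (hA : A ∈ g.inputs) {u : List T}
    (hu : g.leftCorner.Derives [.nonterminal (.inr (A, .nonterminal B))] (u.map .terminal)) :
    g.leftCorner.Derives [.nonterminal (.inl A)] ((w ++ u).map .terminal) := by
  obtain ⟨r, hr, m, rfl, rfl, hm⟩ := h.exists_rule
  obtain ⟨X, β, hout⟩ := List.exists_cons_of_ne_nil (hg r hr)
  rw [hout] at hm
  obtain ⟨w₁, w₂, n₁, n₂, rfl, rfl, h₁, h₂⟩ := hm.append_split_terminal (u₁ := [X])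
  have hβ : g.leftCorner.Derives (β.map g.leftCornerSymbol) (w₂.map .terminal) :=
    h₂.derives_map _ (fun _ => True) (fun _ _ => .refl _) (fun k _ C v _ hC => by
      simpa [leftCornerSymbol] using
        leftCorner_derives_of_derivesIn hg hC hC.mem_inputs (leftCorner_derives_nil hC.mem_inputs)
          (u := []))
      (fun _ _ => trivial)
  have hX : g.leftCorner.Derives [.nonterminal (.inr (A, X))] ((w₂ ++ u).map .terminal) := by
    have hrule := mem_leftCorner_rules.mpr (.inl (.inr ⟨A, hA, r, hr, X, β, hout, rfl⟩))
    refine (produces_of_mem hrule).trans_derives ?_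
    rw [List.map_append]
    exact hβ.append hu
  rw [List.append_assoc]
  cases X with
  | terminal a =>
    rw [h₁.eq_singleton_of_terminal]
    have hrule := mem_leftCorner_rules.mpr
      (.inl (.inl ⟨A, hA, a, ⟨r, hr, hout ▸ List.mem_cons_self⟩, rfl⟩))
    exact (produces_of_mem hrule).trans_derives (hX.append_left [.terminal a])
  | nonterminal B' => exact leftCorner_derives_of_derivesIn hg h₁ hA hX
termination_by n
decreasing_by all_goals omega

mutual

theorem derives_of_leftCorner_inl {n : ℕ} {A : g.NT} {w : List T}
    (h : DerivesIn g.leftCorner [.nonterminal (.inl A)] (w.map .terminal) n) :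
    g.Derives [.nonterminal A] (w.map .terminal) := by
  obtain ⟨r, hr, m, rfl, hin, hm⟩ := h.exists_rule
  rcases mem_leftCorner_rules.mp hr with
    (⟨A', -, a, -, rfl⟩ | ⟨A', -, r₀, -, X, β, -, rfl⟩) | ⟨A', -, rfl⟩
  · obtain rfl : A' = A := Sum.inl.inj hin
    obtain ⟨w₁, w₂, n₁, n₂, rfl, rfl, h₁, h₂⟩ := hm.append_split_terminal (u₁ := [.terminal a])
    rw [h₁.eq_singleton_of_terminal]
    exact derives_of_leftCorner_inr h₂
  · cases hin
  · cases hin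
termination_by n
decreasing_by all_goals omega

theorem derives_of_leftCorner_inr {n : ℕ} {A : g.NT} {X : Symbol T g.NT} {u : List T}
    (h : DerivesIn g.leftCorner [.nonterminal (.inr (A, X))] (u.map .terminal) n) :
    g.Derives [.nonterminal A] (X :: u.map .terminal) := by
  obtain ⟨r, hr, m, rfl, hin, hm⟩ := h.exists_rule
  rcases mem_leftCorner_rules.mp hr with
    (⟨A', -, a, -, rfl⟩ | ⟨A', -, r₀, hr₀, X', β, hout, rfl⟩) | ⟨A', -, rfl⟩
  · cases hin
  · obtain ⟨rfl, rfl⟩ : A' = A ∧ X' = X := by simpa using hin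
    obtain ⟨u₁, u₂, n₁, n₂, rfl, rfl, h₁, h₂⟩ := hm.append_split_terminal
    have hβ : g.Derives β (u₁.map .terminal) := by
      simpa using
        h₁.derives_map g.ofLeftCornerSymbol (fun x => ∀ p, x ≠ .nonterminal (Sum.inr p))
          (fun _ _ => .refl _) (fun k _ C v hC hk => by
            rcases C with C | p
            · exact derives_of_leftCorner_inl hk
            · exact absurd rfl (hC p))
          (fun x hx => by
            obtain ⟨y, -, rfl⟩ := List.mem_map.mp hx
            cases y <;> simp [leftCornerSymbol])
    have hhead := produces_of_mem hr₀ |>.append_right (u₂.map .terminal)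
    rw [hout] at hhead
    refine (derives_of_leftCorner_inr h₂).trans_produces hhead |>.trans ?_
    simpa using (hβ.append_right (u₂.map .terminal)).append_left [_]
  · obtain ⟨rfl, rfl⟩ := Prod.mk.inj (Sum.inr.inj hin)
    rw [hm.eq_nil_of_nil]
    rfl
termination_by n
decreasing_by all_goals omega

end

theorem language_leftCorner (hg : ∀ r ∈ g.rules, r.output ≠ []) :
    g.leftCorner.language = g.language := by
  refine le_antisymm (fun w hw => ?_) fun w hw => ?_
  · obtain ⟨n, hn⟩ := Derives.exists_derivesIn hw
    exact derives_of_leftCorner_inl hn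
  · obtain ⟨n, hn⟩ := Derives.exists_derivesIn hw
    refine (mem_language_iff _ w).mpr ?_
    simpa using leftCorner_derives_of_derivesIn hg hn hn.mem_inputs
      (leftCorner_derives_nil hn.mem_inputs) (u := [])

end LeftCorner

section LeftCornerShape

variable {g : ContextFreeGrammar T}

lemma DeletesNullable.exists_of_terminal_cons {a : T} {l l' : List (Symbol T g.NT)}
    (h : g.DeletesNullable (.terminal a :: l) l') : ∃ l'', l' = .terminal a :: l'' := by
  cases h with
  | keep _ h => exact ⟨_, rfl⟩

lemma not_nullable_leftCorner_inl (A : g.NT) : ¬ g.leftCorner.Nullable (.inl A) := fun h => by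
  obtain ⟨n, hn⟩ := Derives.exists_derivesIn h
  obtain ⟨r, hr, m, rfl, hin, hm⟩ := DerivesIn.exists_rule (w := []) hn
  rcases mem_leftCorner_rules.mp hr with
    (⟨A', -, a, -, rfl⟩ | ⟨A', -, r₀, -, X, β, -, rfl⟩) | ⟨A', -, rfl⟩
  · obtain ⟨w₁, w₂, _, _, hw, _, h₁, _⟩ := hm.append_split_terminal (u₁ := [.terminal a])
    rw [h₁.eq_singleton_of_terminal] at hw
    simp at hw
  · cases hin
  · cases hin

lemma startsWithTerminal_of_mem_removeEpsilon_leftCorner {r : ContextFreeRule T g.LeftCornerNT}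
    (hr : r ∈ g.leftCorner.removeEpsilon.rules) (hrS : r.input ∈ Set.range Sum.inl) :
    r.StartsWithTerminal := by
  obtain ⟨A, hA⟩ := hrS
  obtain ⟨r₀, hr₀, hin, hdel, -⟩ := mem_removeEpsilon_rules.mp hr
  rcases mem_leftCorner_rules.mp hr₀ with
    (⟨A', -, a, -, rfl⟩ | ⟨A', -, r₀, -, X, β, -, rfl⟩) | ⟨A', -, rfl⟩
  · obtain ⟨l, hl⟩ := hdel.exists_of_terminal_cons
    exact ⟨a, l, hl⟩
  · rw [← hA] at hin; cases hin
  · rw [← hA] at hin; cases hin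

lemma startsWithTerminal_or_startsIn_or_isUnitRule_of_mem_removeEpsilon_leftCorner
    {r : ContextFreeRule T g.LeftCornerNT} (hr : r ∈ g.leftCorner.removeEpsilon.rules) :
    r.StartsWithTerminal ∨ r.StartsIn (Set.range Sum.inl) ∨ r.IsUnitRule := by
  obtain ⟨r₀, hr₀, -, hdel, hne⟩ := mem_removeEpsilon_rules.mp hr
  rcases mem_leftCorner_rules.mp hr₀ with
    (⟨A, -, a, -, rfl⟩ | ⟨A, -, r₀, -, X, β, -, rfl⟩) | ⟨A, -, rfl⟩
  · obtain ⟨l, hl⟩ := hdel.exists_of_terminal_cons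
    exact .inl ⟨a, l, hl⟩
  · obtain ⟨l, hl, hdel'⟩ := hdel.exists_eq_append fun B hB => by
      obtain ⟨y, -, hy⟩ := List.mem_map.mp hB
      cases y with
      | terminal => cases hy
      | nonterminal D => cases hy; exact not_nullable_leftCorner_inl D
    rcases β with _ | ⟨y, β⟩
    · rcases List.sublist_singleton.mp hdel'.sublist with rfl | rfl
      · exact absurd hl hne
      · exact .inr (.inr ⟨_, hl⟩)
    · cases y with
      | terminal b => exact .inl ⟨b, β.map g.leftCornerSymbol ++ l, by simp [hl, leftCornerSymbol]⟩
      | nonterminal D =>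
        exact .inr (.inl ⟨.inl D, ⟨D, rfl⟩, β.map g.leftCornerSymbol ++ l,
          by simp [hl, leftCornerSymbol]⟩)
  · exact absurd (List.sublist_nil.mp hdel.sublist) hne

end LeftCornerShape

section LiftTerminals

variable (g : ContextFreeGrammar T)

def liftSymbol : Symbol T g.NT → g.NT ⊕ T
  | .terminal a => .inr a
  | .nonterminal A => .inl A

def unliftSymbol : Symbol T (g.NT ⊕ T) → Symbol T g.NT
  | .terminal a => .terminal a
  | .nonterminal (.inl A) => .nonterminal A
  | .nonterminal (.inr a) => .terminal a

@[simp]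
lemma unliftSymbol_terminal (a : T) : g.unliftSymbol (.terminal a) = .terminal a := rfl

@[simp]
lemma unliftSymbol_nonterminal_inl (A : g.NT) :
    g.unliftSymbol (.nonterminal (.inl A)) = .nonterminal A :=
  rfl

@[simp]
lemma unliftSymbol_nonterminal_liftSymbol (x : Symbol T g.NT) :
    g.unliftSymbol (.nonterminal (g.liftSymbol x)) = x := by
  cases x <;> rfl

def liftTerminalsRules : Set (ContextFreeRule T (g.NT ⊕ T)) :=
  {r | ∃ r₀ ∈ g.rules, ∃ a δ, r₀.output = .terminal a :: δ ∧
    r = ⟨.inl r₀.input, .terminal a :: (δ.map g.liftSymbol).map .nonterminal⟩} ∪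
  {r | ∃ a ∈ g.terminals, r = ⟨.inr a, [.terminal a]⟩}

lemma finite_liftTerminalsRules : g.liftTerminalsRules.Finite := by
  refine .union (((g.rules.finite_toSet.prod g.finite_terminals).image fun p => (⟨.inl p.1.input,
    .terminal p.2 :: (p.1.output.tail.map g.liftSymbol).map .nonterminal⟩ :
      ContextFreeRule T (g.NT ⊕ T))).subset ?_) ((g.finite_terminals.image fun a =>
    (⟨.inr a, [.terminal a]⟩ : ContextFreeRule T (g.NT ⊕ T))).subset ?_)
  · rintro _ ⟨r₀, hr₀, a, δ, hout, rfl⟩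
    exact ⟨(r₀, a), ⟨hr₀, r₀, hr₀, by simp [hout]⟩, by simp [hout]⟩
  · rintro _ ⟨a, ha, rfl⟩
    exact ⟨a, ha, rfl⟩

@[reducible]
noncomputable def liftTerminals : ContextFreeGrammar T :=
  ⟨g.NT ⊕ T, .inl g.initial, g.finite_liftTerminalsRules.toFinset⟩

variable {g}

lemma mem_liftTerminals_rules {r : ContextFreeRule T (g.NT ⊕ T)} :
    r ∈ g.liftTerminals.rules ↔ r ∈ g.liftTerminalsRules :=
  Set.Finite.mem_toFinset _

lemma inGNF_liftTerminals : InGNF g.liftTerminals := by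
  intro r hr
  rcases mem_liftTerminals_rules.mp hr with ⟨r₀, -, a, δ, -, rfl⟩ | ⟨a, -, rfl⟩
  · exact ⟨a, _, rfl⟩
  · exact ⟨a, [], rfl⟩

theorem liftTerminals_derives_of_derivesIn (hg : ∀ r ∈ g.rules, r.StartsWithTerminal) {n : ℕ}
    {A : g.NT} {w : List T} (h : DerivesIn g [.nonterminal A] (w.map .terminal) n) :
    g.liftTerminals.Derives [.nonterminal (.inl A)] (w.map .terminal) := by
  obtain ⟨r, hr, m, rfl, rfl, hm⟩ := h.exists_rule
  obtain ⟨a, δ, hout⟩ := hg r hr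
  rw [hout] at hm
  obtain ⟨w₁, w₂, n₁, n₂, rfl, rfl, h₁, h₂⟩ := hm.append_split_terminal (u₁ := [.terminal a])
  rw [h₁.eq_singleton_of_terminal]
  have hδ : g.liftTerminals.Derives (δ.map (.nonterminal ∘ g.liftSymbol)) (w₂.map .terminal) :=
    h₂.derives_map _ (fun x => ∀ b, x = .terminal b → b ∈ g.terminals)
      (fun b hb => (produces_of_mem (mem_liftTerminals_rules.mpr (.inr ⟨b, hb b rfl, rfl⟩))).single)
      (fun k _ B v _ hk => liftTerminals_derives_of_derivesIn hg hk)
      (fun x hx b hb => ⟨r, hr, hout ▸ hb ▸ List.mem_cons_of_mem _ hx⟩)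
  have hrule := mem_liftTerminals_rules.mpr (.inl ⟨r, hr, a, δ, hout, rfl⟩)
  refine (produces_of_mem hrule).trans_derives ?_
  simpa [List.map_map] using hδ.append_left [.terminal a]
termination_by n
decreasing_by all_goals omega

theorem language_liftTerminals (hg : ∀ r ∈ g.rules, r.StartsWithTerminal) :
    g.liftTerminals.language = g.language := by
  refine le_antisymm (fun w hw => ?_) fun w hw => ?_
  · have hrules : ∀ r ∈ g.liftTerminals.rules, g.Derives [g.unliftSymbol (.nonterminal r.input)]
        (r.output.flatMap fun x => [g.unliftSymbol x]) := by
      intro r hr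
      rcases mem_liftTerminals_rules.mp hr with ⟨r₀, hr₀, a, δ, hout, rfl⟩ | ⟨a, -, rfl⟩
      · simpa [List.flatMap_map, ← hout] using (produces_of_mem hr₀).single
      · rfl
    exact (mem_language_iff g w).mpr <| by
      simpa [← List.map_eq_flatMap, Function.comp_def] using
        Derives.flatMap (fun x => [g.unliftSymbol x]) hrules hw
  · obtain ⟨n, hn⟩ := Derives.exists_derivesIn hw
    exact liftTerminals_derives_of_derivesIn hg hn

end LiftTerminals

end ContextFreeGrammar

/-- Every context-free language not containing the empty string is generated by a
context-free grammar in Greibach Normal Form. -/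
theorem exists_gnf_grammar {T : Type} (L : Language T)
    (hL : L.IsContextFree) (hε : [] ∉ L) :
    ∃ g : ContextFreeGrammar T, InGNF g ∧ g.language = L := by
  open ContextFreeGrammar in
  obtain ⟨g, rfl⟩ := hL
  have hL₁ : g.removeEpsilon.leftCorner.removeEpsilon.language = g.language := by
    have hε₁ : [] ∉ g.removeEpsilon.leftCorner.language := by
      rwa [language_leftCorner fun r => removeEpsilon_output_ne_nil, language_removeEpsilon hε]
    rw [language_removeEpsilon hε₁, language_leftCorner fun r => removeEpsilon_output_ne_nil,
      language_removeEpsilon hε]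
  have hS : ∀ r ∈ g.removeEpsilon.leftCorner.removeEpsilon.removeUnit.rules,
      r.input ∈ Set.range Sum.inl → r.StartsWithTerminal := fun r =>
    startsWithTerminal_of_mem_removeUnit fun r => startsWithTerminal_of_mem_removeEpsilon_leftCorner
  have hshape : ∀ r ∈ g.removeEpsilon.leftCorner.removeEpsilon.removeUnit.rules,
      r.StartsWithTerminal ∨ r.StartsIn (Set.range Sum.inl) := fun r =>
    startsWithTerminal_or_startsIn_of_mem_removeUnit fun r =>
      startsWithTerminal_or_startsIn_or_isUnitRule_of_mem_removeEpsilon_leftCorner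
  have hg₂ : ∀ r ∈ g.removeEpsilon.leftCorner.removeEpsilon.removeUnit.expandHead.rules,
      r.StartsWithTerminal := fun r => startsWithTerminal_of_mem_expandHead hS hshape
  refine ⟨g.removeEpsilon.leftCorner.removeEpsilon.removeUnit.expandHead.liftTerminals,
    inGNF_liftTerminals, ?_⟩
  rw [language_liftTerminals hg₂, language_expandHead, language_removeUnit, hL₁]
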